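/- arXiv:2003.07060 — 2 statements merged into one kernel-verified Lean document; each statement's English description precedes it below -/
import Mathlib

section
/- Suppose each of n agents has a matroid rank valuation v_i on subsets of a finite set O of items, and let Φ : ℤ^n → ℝ be a symmetric strictly convex function. For an allocation A put Φ(A) = Φ(v_1(A_1),…,v_n(A_n)). Then an allocation A is leximin if and only if A is utilitarian optimal and Φ(A) ≤ Φ(B) for every utilitarian optimal allocation B. -/
/-- An allocation: bundles are pairwise disjoint. -/
def IsAlloc {O : Type*} [DecidableEq O] {n : ℕ} (A : Fin n → Finset O) : Prop :=
  ∀ i j, i ≠ j → Disjoint (A i) (A j)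

/-- Utilitarian social welfare. -/
def USW {O : Type*} {n : ℕ} (v : Fin n → Finset O → ℤ)
    (A : Fin n → Finset O) : ℤ :=
  ∑ i, v i (A i)

/-- The vector of realized valuations, sorted in non-decreasing order. -/
def sVec {O : Type*} {n : ℕ} (v : Fin n → Finset O → ℤ)
    (A : Fin n → Finset O) : Fin n → ℤ :=
  (fun i => v i (A i)) ∘ Tuple.sort (fun i => v i (A i))

/-!
Leximin allocations and `Φ`-minimal utilitarian-optimal allocations have the same sorted utility
profile. The tool is path augmentation for binary submodular valuations: if agent `i` values its
bundle in `B` more than in `A`, passing items along an alternating path raises `i`'s utility by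
one, at nobody's expense or at the expense of one agent `j` with `v j (B j) < v j (A j)`.

Given a `Φ`-minimiser `Y` and a leximin `L`, let `i` be the least-served agent among those below
their level in `L`, and move one unit from the agent `j` supplied by the path to `i`. If
`Y j ≤ Y i`, the path from `L` back towards `Y` lexicographically improves `L`; if
`Y j = Y i + 1`, the transfer swaps two values, keeping `Φ` and the sorted profile and moving `Y`
closer to `L`; if `Y j ≥ Y i + 2`, symmetry and strict convexity make `Φ` strictly smaller. The
same path argument shows that leximin allocations are utilitarian optimal.
-/

section BinarySubmodular

open Finset

variable {O : Type*} [DecidableEq O]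

/-- A matroid rank function, up to the value at `∅`. -/
structure IsBinarySubmodular (f : Finset O → ℤ) : Prop where
  marginal_zero_or_one : ∀ S o, o ∉ S → f (insert o S) - f S = 0 ∨ f (insert o S) - f S = 1
  marginal_antitone : ∀ S T, S ⊆ T → ∀ o ∉ T, f (insert o T) - f T ≤ f (insert o S) - f S

namespace IsBinarySubmodular

variable {f : Finset O → ℤ}

theorem monotone (hf : IsBinarySubmodular f) : Monotone f :=
  monotone_iff_forall_le_insert.mpr fun S o ho => by
    rcases hf.marginal_zero_or_one S o ho with h | h <;> omega

theorem sub_one_le_erase (hf : IsBinarySubmodular f) (S : Finset O) (o : O) :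
    f S - 1 ≤ f (S.erase o) := by
  by_cases ho : o ∈ S
  · have := hf.marginal_zero_or_one (S.erase o) o (notMem_erase o S)
    rw [insert_erase ho] at this
    omega
  · rw [erase_eq_of_notMem ho]
    omega

theorem union_eq_of_forall_insert_eq (hf : IsBinarySubmodular f) {I K : Finset O}
    (hK : ∀ y ∈ K, f (insert y I) = f I) : f (I ∪ K) = f I := by
  induction K using Finset.induction_on with
  | empty => simp
  | insert a K _ ih =>
    have hIK := ih fun y hy => hK y (mem_insert_of_mem hy)
    rw [union_insert]
    by_cases ha : a ∈ I ∪ K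
    · rwa [insert_eq_of_mem ha]
    · have hsub := hf.marginal_antitone I (I ∪ K) subset_union_left a ha
      have hmono := hf.monotone (subset_insert a (I ∪ K))
      have hIa := hK a (mem_insert_self a K)
      omega

theorem exists_insert_eq_add_one (hf : IsBinarySubmodular f) {A B : Finset O} (h : f A < f B) :
    ∃ y ∈ B, y ∉ A ∧ f (insert y A) = f A + 1 := by
  by_contra! hcon
  have hclosed : f (A ∪ B) = f A := hf.union_eq_of_forall_insert_eq fun y hy => by
    by_cases hyA : y ∈ A
    · rw [insert_eq_of_mem hyA]
    · have := hcon y hy hyA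
      rcases hf.marginal_zero_or_one A y hyA with h' | h' <;> omega
  have := hf.monotone (subset_union_right : B ⊆ A ∪ B)
  omega

end IsBinarySubmodular

end BinarySubmodular

section SortedTuple

open Finset

variable {α : Type*} [LinearOrder α] {n : ℕ}

def countLE (u : Fin n → α) (c : α) : ℕ := #{k | u k ≤ c}

theorem countLE_comp_perm (u : Fin n → α) (σ : Equiv.Perm (Fin n)) (c : α) :
    countLE (u ∘ σ) c = countLE u c :=
  card_equiv σ (by simp)

theorem countLE_le (u : Fin n → α) (c : α) : countLE u c ≤ n :=
  (card_le_univ _).trans_eq (Fintype.card_fin n)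

theorem Monotone.le_iff_lt_countLE {s : Fin n → α} (hs : Monotone s) (m : Fin n) (c : α) :
    s m ≤ c ↔ (m : ℕ) < countLE s c := by
  constructor
  · intro h
    have hsub : Iic m ⊆ ({k | s k ≤ c} : Finset (Fin n)) := fun k hk =>
      mem_filter.mpr ⟨mem_univ k, (hs (mem_Iic.mp hk)).trans h⟩
    simpa [countLE] using card_le_card hsub
  · intro h
    by_contra! hc
    have hsub : ({k | s k ≤ c} : Finset (Fin n)) ⊆ Iio m := fun k hk => by
      rw [mem_Iio]
      by_contra! hmk
      exact (hc.trans_le (hs hmk)).not_ge (mem_filter.mp hk).2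
    exact absurd (card_le_card hsub) (by simpa [countLE] using h)

theorem toLex_lt_of_countLE {s s' : Fin n → α} (hs : Monotone s) (hs' : Monotone s') (c : α)
    (hc : countLE s' c < countLE s c) (hlt : ∀ d < c, countLE s' d = countLE s d) :
    toLex s < toLex s' := by
  have hagree : ∀ l : Fin n, (l : ℕ) < countLE s' c → s l = s' l := by
    intro l hl
    have hs'l : s' l ≤ c := (hs'.le_iff_lt_countLE l c).mpr hl
    have hsl : s l ≤ c := (hs.le_iff_lt_countLE l c).mpr (hl.trans hc)
    rcases lt_trichotomy (s l) (s' l) with h | h | h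
    · have := (hs.le_iff_lt_countLE l (s l)).mp le_rfl
      rw [← hlt _ (h.trans_le hs'l), ← hs'.le_iff_lt_countLE] at this
      exact absurd this (not_le.mpr h)
    · exact h
    · have := (hs'.le_iff_lt_countLE l (s' l)).mp le_rfl
      rw [hlt _ (h.trans_le hsl), ← hs.le_iff_lt_countLE] at this
      exact absurd this (not_le.mpr h)
  let J : Fin n := ⟨countLE s' c, hc.trans_le (countLE_le s c)⟩
  have hsJ : s J ≤ c := (hs.le_iff_lt_countLE J c).mpr hc
  have hs'J : c < s' J := not_le.mp fun h => ((hs'.le_iff_lt_countLE J c).mp h).false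
  exact ⟨J, fun l hl => hagree l hl, hsJ.trans_lt hs'J⟩

theorem toLex_comp_sort_lt_of_forall_le_iff {u u' : Fin n → α} (i : Fin n)
    (hlt : ∀ d < u i, ∀ k, u' k ≤ d ↔ u k ≤ d) (hi : ∀ k, u' k ≤ u i ↔ u k ≤ u i ∧ k ≠ i) :
    toLex (u ∘ Tuple.sort u) < toLex (u' ∘ Tuple.sort u') := by
  apply toLex_lt_of_countLE (Tuple.monotone_sort u) (Tuple.monotone_sort u') (u i)
  · have herase : ({k | u' k ≤ u i} : Finset (Fin n)) = ({k | u k ≤ u i} : Finset _).erase i := by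
      ext k
      simp [hi, and_comm]
    rw [countLE_comp_perm, countLE_comp_perm, countLE, countLE, herase]
    exact card_erase_lt_of_mem (by simp)
  · intro d hd
    rw [countLE_comp_perm, countLE_comp_perm, countLE, countLE,
      filter_congr (fun k _ => hlt d hd k)]

end SortedTuple

section Transfer

open Finset

variable {n : ℕ}

def transfer (u : Fin n → ℤ) (i j : Fin n) : Fin n → ℤ := u + Pi.single i 1 - Pi.single j 1

@[simp]
theorem transfer_apply (u : Fin n → ℤ) (i j k : Fin n) :
    transfer u i j k = u k + (if k = i then 1 else 0) - (if k = j then 1 else 0) := by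
  simp [transfer, Pi.single_apply]

theorem toLex_comp_sort_lt_add_single (u : Fin n → ℤ) (i : Fin n) :
    toLex (u ∘ Tuple.sort u) <
      toLex ((u + Pi.single i 1) ∘ Tuple.sort (u + Pi.single i 1)) := by
  apply toLex_comp_sort_lt_of_forall_le_iff i <;>
  · intros
    simp only [Pi.add_apply, Pi.single_apply]
    split_ifs <;> subst_vars <;> omega

theorem toLex_comp_sort_lt_transfer (u : Fin n → ℤ) {i j : Fin n} (h : u i + 1 < u j) :
    toLex (u ∘ Tuple.sort u) < toLex (transfer u i j ∘ Tuple.sort (transfer u i j)) := by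
  have hij : i ≠ j := fun hij => by subst hij; omega
  apply toLex_comp_sort_lt_of_forall_le_iff i <;>
  · intros
    simp only [transfer_apply]
    split_ifs <;> subst_vars <;> omega

theorem comp_swap_eq_transfer (u : Fin n → ℤ) {i j : Fin n} (h : u j = u i + 1) :
    u ∘ Equiv.swap i j = transfer u i j := by
  have hij : i ≠ j := fun hij => by subst hij; omega
  funext k
  rcases eq_or_ne k i with rfl | hki
  · simp [hij]
    omega
  rcases eq_or_ne k j with rfl | hkj
  · simp [hki]
    omega
  simp [Equiv.swap_apply_of_ne_of_ne hki hkj, hki, hkj]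

/-- The transfer is a proper convex combination of `u` and `u ∘ swap i j`. -/
theorem apply_transfer_lt (Φ : (Fin n → ℤ) → ℝ)
    (hsymm : ∀ (π : Equiv.Perm (Fin n)) (x : Fin n → ℤ), Φ (x ∘ π) = Φ x)
    (hconv : ∀ x y : Fin n → ℤ, x ≠ y → ∀ l : ℝ, 0 < l → l < 1 →
      ∀ z : Fin n → ℤ, (∀ k, (z k : ℝ) = l * (x k : ℝ) + (1 - l) * (y k : ℝ)) →
      Φ z < l * Φ x + (1 - l) * Φ y)
    (u : Fin n → ℤ) {i j : Fin n} (h : u i + 2 ≤ u j) :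
    Φ (transfer u i j) < Φ u := by
  have hij : i ≠ j := fun hij => by subst hij; omega
  have hne : u ≠ u ∘ Equiv.swap i j := fun he => by
    have := congrFun he i
    simp at this
    omega
  have hg : (2 : ℝ) ≤ u j - u i := by
    have : ((u i + 2 : ℤ) : ℝ) ≤ u j := by exact_mod_cast h
    push_cast at this
    linarith
  set l : ℝ := 1 - 1 / (u j - u i)
  have hl0 : 0 < l := by
    have : 1 / ((u j : ℝ) - u i) ≤ 1 / 2 := one_div_le_one_div_of_le two_pos hg
    linarith
  have hl1 : l < 1 := by
    have : 0 < 1 / ((u j : ℝ) - u i) := by positivity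
    linarith
  have hcomb : ∀ k, (transfer u i j k : ℝ) =
      l * u k + (1 - l) * (u ∘ Equiv.swap i j) k := by
    intro k
    have hpos : (u j : ℝ) - u i ≠ 0 := by linarith
    rcases eq_or_ne k i with rfl | hki
    · simp [hij, l]
      field_simp
      ring
    rcases eq_or_ne k j with rfl | hkj
    · simp [hki, l]
      field_simp
      ring
    simp [Equiv.swap_apply_of_ne_of_ne hki hkj, hki, hkj]
    ring
  have := hconv u _ hne l hl0 hl1 _ hcomb
  rw [hsymm] at this
  linarith

theorem sum_add_single (u : Fin n → ℤ) (i : Fin n) :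
    ∑ k, (u + Pi.single i 1 : Fin n → ℤ) k = ∑ k, u k + 1 := by
  simp [sum_add_distrib]

theorem sum_transfer (u : Fin n → ℤ) (i j : Fin n) :
    ∑ k, transfer u i j k = ∑ k, u k := by
  simp [transfer, sum_add_distrib, sum_sub_distrib]

theorem sum_natAbs_sub_transfer_lt {u w : Fin n → ℤ} {i j : Fin n} (hi : u i < w i)
    (hj : w j < u j) :
    ∑ k, (w k - transfer u i j k).natAbs < ∑ k, (w k - u k).natAbs := by
  have hij : i ≠ j := fun hij => by subst hij; omega
  refine sum_lt_sum (fun k _ => ?_) ⟨i, mem_univ i, ?_⟩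
  · simp only [transfer_apply]
    split_ifs <;> subst_vars <;> omega
  · simp [hij]
    omega

theorem exists_lt_of_sum_eq {u w : Fin n → ℤ} (hne : u ≠ w) (hsum : ∑ k, u k = ∑ k, w k) :
    ∃ k, u k < w k := by
  by_contra! h
  refine hne (funext fun k => ?_)
  exact ((sum_eq_sum_iff_of_le fun k _ => h k).mp hsum.symm k (mem_univ k)).symm

end Transfer

section Allocation

open Finset

variable {O : Type*} {n : ℕ} {v : Fin n → Finset O → ℤ} {A B : Fin n → Finset O}

def utilities (v : Fin n → Finset O → ℤ) (A : Fin n → Finset O) : Fin n → ℤ :=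
  fun i => v i (A i)

theorem sVec_eq_comp_sort (v : Fin n → Finset O → ℤ) (A : Fin n → Finset O) :
    sVec v A = utilities v A ∘ Tuple.sort (utilities v A) :=
  rfl

theorem USW_eq_of_utilities_eq_add_single {i : Fin n}
    (h : utilities v B = utilities v A + Pi.single i 1) : USW v B = USW v A + 1 := by
  change ∑ k, utilities v B k = ∑ k, utilities v A k + 1
  rw [h, sum_add_single]

theorem USW_eq_of_utilities_eq_transfer {i j : Fin n}
    (h : utilities v B = transfer (utilities v A) i j) : USW v B = USW v A := by
  change ∑ k, utilities v B k = ∑ k, utilities v A k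
  rw [h, sum_transfer]

variable [DecidableEq O]

def IsUtilitarianOptimal (v : Fin n → Finset O → ℤ) (A : Fin n → Finset O) : Prop :=
  ∀ B, IsAlloc B → USW v B ≤ USW v A

def IsLeximin (v : Fin n → Finset O → ℤ) (A : Fin n → Finset O) : Prop :=
  ∀ B, IsAlloc B → toLex (sVec v B) ≤ toLex (sVec v A)

def moveItem (A : Fin n → Finset O) (y : O) (i : Fin n) : Fin n → Finset O :=
  fun k => if k = i then insert y (A k) else (A k).erase y

theorem IsAlloc.moveItem (hA : IsAlloc A) (y : O) (i : Fin n) : IsAlloc (moveItem A y i) := by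
  intro k l hkl
  have hd := hA k l hkl
  unfold _root_.moveItem
  split_ifs with hk hl hl
  · exact absurd (hk.trans hl.symm) hkl
  · exact disjoint_insert_left.mpr ⟨notMem_erase y _, hd.mono_right (erase_subset y _)⟩
  · exact disjoint_insert_right.mpr ⟨notMem_erase y _, hd.mono_left (erase_subset y _)⟩
  · exact hd.mono (erase_subset y _) (erase_subset y _)

theorem utilities_moveItem_of_forall {y : O} {i : Fin n}
    (hi : v i (insert y (A i)) = v i (A i) + 1) (hk : ∀ k ≠ i, v k ((A k).erase y) = v k (A k)) :
    utilities v (moveItem A y i) = utilities v A + Pi.single i 1 := by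
  funext k
  rcases eq_or_ne k i with rfl | hki
  · simp [utilities, moveItem, hi]
  · simp [utilities, moveItem, hki, hk k hki]

theorem utilities_moveItem_of_mem (hA : IsAlloc A) {y : O} {i j : Fin n} (hji : j ≠ i)
    (hyj : y ∈ A j) (hi : v i (insert y (A i)) = v i (A i) + 1)
    (hj : v j ((A j).erase y) = v j (A j) - 1) :
    utilities v (moveItem A y i) = transfer (utilities v A) i j := by
  funext k
  rcases eq_or_ne k i with rfl | hki
  · simp [utilities, moveItem, hi, hji.symm]
  rcases eq_or_ne k j with rfl | hkj
  · simp [utilities, moveItem, hj, hji]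
  have hyk : y ∉ A k := fun hyk => disjoint_left.mp (hA j k hkj.symm) hyj hyk
  simp [utilities, moveItem, hki, hkj, erase_eq_of_notMem hyk]

theorem sum_card_sdiff_moveItem_lt (hB : IsAlloc B) {y : O} {i j : Fin n} (hji : j ≠ i)
    (hyB : y ∈ B i) (hyA : y ∈ A j) :
    ∑ k, #(moveItem A y i k \ B k) < ∑ k, #(A k \ B k) := by
  have hyBj : y ∉ B j := disjoint_left.mp (hB i j hji.symm) hyB
  refine sum_lt_sum (fun k _ => card_le_card ?_) ⟨j, mem_univ j, card_lt_card ?_⟩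
  · unfold moveItem
    split_ifs with hki
    · subst hki
      intro x hx
      simp only [mem_sdiff, mem_insert] at hx ⊢
      rcases hx with ⟨rfl | hx, hxB⟩
      · exact absurd hyB hxB
      · exact ⟨hx, hxB⟩
    · exact sdiff_subset_sdiff (erase_subset y _) le_rfl
  · simp only [moveItem, if_neg hji]
    refine ssubset_iff_of_subset (sdiff_subset_sdiff (erase_subset y _) le_rfl) |>.mpr ⟨y, ?_, ?_⟩
    · exact mem_sdiff.mpr ⟨hyA, hyBj⟩
    · simp

/-- Induction on the number of items held outside their `B`-bundle: `i` takes an item of `B i`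
that raises its value; if its former owner `j` loses a unit without being better off in `A`
than in `B`, continue with `j`. -/
theorem exists_augment (hv : ∀ k, IsBinarySubmodular (v k)) (hB : IsAlloc B) (hA : IsAlloc A)
    {i : Fin n} (hi : v i (A i) < v i (B i)) :
    ∃ A', IsAlloc A' ∧ (utilities v A' = utilities v A + Pi.single i 1 ∨
      ∃ j, v j (B j) < v j (A j) ∧ utilities v A' = transfer (utilities v A) i j) := by
  induction hm : ∑ k, #(A k \ B k) using Nat.strong_induction_on generalizing A i with
  | _ m ih =>
  obtain ⟨y, hyB, hyA, hyv⟩ := (hv i).exists_insert_eq_add_one hi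
  by_cases hdrop : ∃ j ≠ i, v j ((A j).erase y) < v j (A j)
  swap
  · push Not at hdrop
    refine ⟨_, hA.moveItem y i, .inl (utilities_moveItem_of_forall hyv fun k hk => ?_)⟩
    exact le_antisymm ((hv k).monotone (erase_subset y _)) (hdrop k hk)
  obtain ⟨j, hji, hj⟩ := hdrop
  have hyj : y ∈ A j := by_contra fun h => (erase_eq_of_notMem h ▸ hj).false
  have hu := utilities_moveItem_of_mem hA hji hyj hyv
    (by linarith [(hv j).sub_one_le_erase (A j) y])
  by_cases hBj : v j (B j) < v j (A j)
  · exact ⟨_, hA.moveItem y i, .inr ⟨j, hBj, hu⟩⟩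
  have hj' : v j (moveItem A y i j) < v j (B j) := by
    have := congrFun hu j
    simp [utilities, hji] at this
    omega
  obtain ⟨A', hA', hA'u⟩ := ih _ (hm ▸ sum_card_sdiff_moveItem_lt hB hji hyB hyj)
    (hA.moveItem y i) hj' rfl
  refine ⟨A', hA', ?_⟩
  rcases hA'u with h | ⟨j₂, hj₂, h⟩
  · left
    rw [h, hu]
    simp only [transfer]
    abel
  · right
    refine ⟨j₂, ?_, by rw [h, hu]; simp only [transfer]; abel⟩
    have := congrFun hu j₂
    simp only [utilities, transfer_apply] at this
    split_ifs at this <;> subst_vars <;> omega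

end Allocation

section Leximin

open Finset

variable {O : Type*} [DecidableEq O] {n : ℕ} {v : Fin n → Finset O → ℤ}
  {A B L Y : Fin n → Finset O}

theorem IsUtilitarianOptimal.exists_transfer (hv : ∀ k, IsBinarySubmodular (v k))
    (hopt : IsUtilitarianOptimal v A) (hA : IsAlloc A) (hB : IsAlloc B) {i : Fin n}
    (hi : v i (A i) < v i (B i)) :
    ∃ j, v j (B j) < v j (A j) ∧ ∃ A', IsAlloc A' ∧ IsUtilitarianOptimal v A' ∧
      utilities v A' = transfer (utilities v A) i j := by
  obtain ⟨A', hA', h | ⟨j, hj, h⟩⟩ := exists_augment hv hB hA hi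
  · have := hopt A' hA'
    rw [USW_eq_of_utilities_eq_add_single h] at this
    omega
  · refine ⟨j, hj, A', hA', fun C hC => ?_, h⟩
    rw [USW_eq_of_utilities_eq_transfer h]
    exact hopt C hC

theorem isAlloc_empty : IsAlloc (fun _ : Fin n => (∅ : Finset O)) :=
  fun _ _ _ => disjoint_empty_left _

variable [Fintype O]

theorem exists_isAlloc_forall_le {β : Type*} [LinearOrder β]
    (p : (Fin n → Finset O) → Prop) (hp : ∃ A, IsAlloc A ∧ p A) (g : (Fin n → Finset O) → β) :
    ∃ A, IsAlloc A ∧ p A ∧ ∀ B, IsAlloc B → p B → g B ≤ g A := by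
  classical
  obtain ⟨A, hA, hmax⟩ := exists_max_image {A | IsAlloc A ∧ p A} g
    (by simpa [Finset.Nonempty] using hp)
  simp only [mem_filter, mem_univ, true_and] at hA hmax
  exact ⟨A, hA.1, hA.2, fun B hB hpB => hmax B ⟨hB, hpB⟩⟩

theorem exists_isLeximin (v : Fin n → Finset O → ℤ) : ∃ L, IsAlloc L ∧ IsLeximin v L := by
  obtain ⟨L, hL, -, hmax⟩ :=
    exists_isAlloc_forall_le (fun _ => True) ⟨_, isAlloc_empty, trivial⟩ (toLex ∘ sVec v)
  exact ⟨L, hL, fun B hB => hmax B hB trivial⟩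

theorem exists_isUtilitarianOptimal (v : Fin n → Finset O → ℤ) :
    ∃ A, IsAlloc A ∧ IsUtilitarianOptimal v A := by
  obtain ⟨A, hA, -, hmax⟩ :=
    exists_isAlloc_forall_le (fun _ => True) ⟨_, isAlloc_empty, trivial⟩ (USW v)
  exact ⟨A, hA, fun B hB => hmax B hB trivial⟩

theorem exists_isUtilitarianOptimal_forall_le (v : Fin n → Finset O → ℤ)
    (Φ : (Fin n → ℤ) → ℝ) :
    ∃ Y, IsAlloc Y ∧ IsUtilitarianOptimal v Y ∧
      ∀ B, IsAlloc B → IsUtilitarianOptimal v B → Φ (utilities v Y) ≤ Φ (utilities v B) := by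
  obtain ⟨Y, hY, hYopt, hmin⟩ := exists_isAlloc_forall_le (IsUtilitarianOptimal v)
    (exists_isUtilitarianOptimal v) fun B => -Φ (utilities v B)
  exact ⟨Y, hY, hYopt, fun B hB hBopt => neg_le_neg_iff.mp (hmin B hB hBopt)⟩

theorem IsLeximin.isUtilitarianOptimal (hv : ∀ k, IsBinarySubmodular (v k)) (hA : IsAlloc A)
    (hlex : IsLeximin v A) : IsUtilitarianOptimal v A := by
  obtain ⟨B, hB, hBopt⟩ := exists_isUtilitarianOptimal v
  suffices USW v B ≤ USW v A from fun C hC => (hBopt C hC).trans this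
  induction hm : ∑ k, (utilities v A k - utilities v B k).natAbs using Nat.strong_induction_on
    generalizing B with
  | _ m ih =>
  by_cases hdef : ∃ j, v j (B j) < v j (A j)
  · obtain ⟨j, hj⟩ := hdef
    obtain ⟨j', hj', B', hB', hB'opt, hu⟩ := hBopt.exists_transfer hv hB hA hj
    rw [← USW_eq_of_utilities_eq_transfer hu]
    refine ih _ ?_ B' hB' hB'opt rfl
    rw [hu, ← hm]
    exact sum_natAbs_sub_transfer_lt hj hj'
  push Not at hdef
  by_contra! hlt
  obtain ⟨i, -, hi⟩ := exists_lt_of_sum_lt hlt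
  obtain ⟨A', hA', h | ⟨j, hj, -⟩⟩ := exists_augment hv hB hA hi
  · have hgt := toLex_comp_sort_lt_add_single (utilities v A) i
    rw [← h] at hgt
    exact (hlex A' hA').not_gt hgt
  · exact (hdef j).not_gt hj

theorem IsLeximin.exists_lt_and_le_add_one_of_lt (hv : ∀ k, IsBinarySubmodular (v k))
    (hL : IsAlloc L) (hlex : IsLeximin v L) (hY : IsAlloc Y) {j : Fin n}
    (hj : v j (L j) < v j (Y j)) : ∃ j', v j' (Y j') < v j' (L j') ∧ v j' (L j') ≤ v j (L j) + 1 := by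
  obtain ⟨j', hj', L', hL', -, hu⟩ :=
    (hlex.isUtilitarianOptimal hv hL).exists_transfer hv hL hY hj
  refine ⟨j', hj', not_lt.mp fun hgap => ?_⟩
  have hgt := toLex_comp_sort_lt_transfer (utilities v L) hgap
  rw [← hu] at hgt
  exact (hlex L' hL').not_gt hgt

theorem IsLeximin.sVec_eq_of_forall_le (hv : ∀ k, IsBinarySubmodular (v k))
    {Φ : (Fin n → ℤ) → ℝ} (hsymm : ∀ (π : Equiv.Perm (Fin n)) (x : Fin n → ℤ), Φ (x ∘ π) = Φ x)
    (htransfer : ∀ (u : Fin n → ℤ) (i j : Fin n), u i + 2 ≤ u j → Φ (transfer u i j) < Φ u)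
    (hL : IsAlloc L) (hlex : IsLeximin v L) (hY : IsAlloc Y) (hYopt : IsUtilitarianOptimal v Y)
    (hYmin : ∀ B, IsAlloc B → IsUtilitarianOptimal v B → Φ (utilities v Y) ≤ Φ (utilities v B)) :
    sVec v Y = sVec v L := by
  induction hm : ∑ k, (utilities v L k - utilities v Y k).natAbs using Nat.strong_induction_on
    generalizing Y with
  | _ m ih =>
  by_cases heq : utilities v Y = utilities v L
  · rw [sVec_eq_comp_sort, sVec_eq_comp_sort, heq]
  have hbelow : ∃ k, v k (Y k) < v k (L k) :=
    exists_lt_of_sum_eq heq (le_antisymm (hlex.isUtilitarianOptimal hv hL Y hY) (hYopt L hL))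
  obtain ⟨i, hi, himin⟩ := exists_min_image {k | v k (Y k) < v k (L k)} (fun k => v k (Y k))
    (by simpa [Finset.Nonempty] using hbelow)
  simp only [mem_filter, mem_univ, true_and] at hi himin
  obtain ⟨j, hj, Y', hY', hY'opt, hu⟩ := hYopt.exists_transfer hv hY hL hi
  rcases lt_trichotomy (v j (Y j)) (v i (Y i) + 1) with hji | hji | hji
  · obtain ⟨j', hj', hj'L⟩ := hlex.exists_lt_and_le_add_one_of_lt hv hL hY hj
    linarith [himin j' hj']
  · have hswap : utilities v Y ∘ Equiv.swap i j = utilities v Y' :=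
      (comp_swap_eq_transfer (utilities v Y) hji).trans hu.symm
    have hsort : sVec v Y' = sVec v Y := by
      rw [sVec_eq_comp_sort, sVec_eq_comp_sort, ← hswap]
      exact Tuple.comp_perm_comp_sort_eq_comp_sort
    rw [← hsort]
    refine ih _ ?_ hY' hY'opt (fun B hB hBopt => ?_) rfl
    · rw [hu, ← hm]
      exact sum_natAbs_sub_transfer_lt hi hj
    · rw [← hswap, hsymm]
      exact hYmin B hB hBopt
  · have hlt := htransfer (utilities v Y) i j (by change v i (Y i) + 2 ≤ v j (Y j); omega)
    rw [← hu] at hlt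
    exact absurd (hYmin Y' hY' hY'opt) (not_le.mpr hlt)

end Leximin

theorem leximin_iff_min_symmetric_strictly_convex_general
    {O : Type*} [DecidableEq O] [Fintype O] {n : ℕ}
    (v : Fin n → Finset O → ℤ)
    (hbin : ∀ i (S : Finset O) (o : O), o ∉ S →
      v i (insert o S) - v i S = 0 ∨ v i (insert o S) - v i S = 1)
    (hsub : ∀ i (S T : Finset O), S ⊆ T → ∀ o ∉ T,
      v i (insert o T) - v i T ≤ v i (insert o S) - v i S)
    (Φ : (Fin n → ℤ) → ℝ)
    (hsymm : ∀ (π : Equiv.Perm (Fin n)) (x : Fin n → ℤ), Φ (x ∘ π) = Φ x)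
    (hconv : ∀ x y : Fin n → ℤ, x ≠ y → ∀ l : ℝ, 0 < l → l < 1 →
      ∀ z : Fin n → ℤ, (∀ k, (z k : ℝ) = l * (x k : ℝ) + (1 - l) * (y k : ℝ)) →
      Φ z < l * Φ x + (1 - l) * Φ y)
    (A : Fin n → Finset O) :
    (IsAlloc A ∧ ∀ B : Fin n → Finset O, IsAlloc B →
        toLex (sVec v B) ≤ toLex (sVec v A)) ↔
    (IsAlloc A ∧ (∀ B : Fin n → Finset O, IsAlloc B → USW v B ≤ USW v A) ∧
      ∀ B : Fin n → Finset O, IsAlloc B →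
        (∀ C : Fin n → Finset O, IsAlloc C → USW v C ≤ USW v B) →
        Φ (fun i => v i (A i)) ≤ Φ (fun i => v i (B i))) := by
  have hv : ∀ i, IsBinarySubmodular (v i) := fun i => ⟨hbin i, hsub i⟩
  have htransfer := fun u i j (h : u i + 2 ≤ u j) => apply_transfer_lt Φ hsymm hconv u h
  constructor
  · rintro ⟨hA, hlex⟩
    obtain ⟨Y, hY, hYopt, hYmin⟩ := exists_isUtilitarianOptimal_forall_le v Φ
    have hsort := IsLeximin.sVec_eq_of_forall_le hv hsymm htransfer hA hlex hY hYopt hYmin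
    refine ⟨hA, IsLeximin.isUtilitarianOptimal hv hA hlex, fun B hB hBopt => ?_⟩
    calc Φ (utilities v A) = Φ (sVec v A) := (hsymm _ _).symm
      _ = Φ (sVec v Y) := by rw [hsort]
      _ = Φ (utilities v Y) := hsymm _ _
      _ ≤ Φ (utilities v B) := hYmin B hB hBopt
  · rintro ⟨hA, hAopt, hAmin⟩
    obtain ⟨L, hL, hlex⟩ := exists_isLeximin v
    have hsort := hlex.sVec_eq_of_forall_le hv hsymm htransfer hL hA hAopt hAmin
    exact ⟨hA, fun B hB => hsort ▸ hlex B hB⟩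

/-- For matroid rank valuations and any symmetric strictly
convex `Φ : ℤ^n → ℝ`, an allocation is leximin iff it minimizes `Φ` over all
utilitarian optimal allocations. -/
theorem leximin_iff_min_symmetric_strictly_convex
    {O : Type*} [DecidableEq O] [Fintype O] {n : ℕ}
    (v : Fin n → Finset O → ℤ)
    (h0 : ∀ i, v i ∅ = 0)
    (hbin : ∀ i (S : Finset O) (o : O), o ∉ S →
      v i (insert o S) - v i S = 0 ∨ v i (insert o S) - v i S = 1)
    (hsub : ∀ i (S T : Finset O), S ⊆ T → ∀ o ∉ T,
      v i (insert o T) - v i T ≤ v i (insert o S) - v i S)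
    (Φ : (Fin n → ℤ) → ℝ)
    (hsymm : ∀ (π : Equiv.Perm (Fin n)) (x : Fin n → ℤ), Φ (x ∘ π) = Φ x)
    (hconv : ∀ x y : Fin n → ℤ, x ≠ y → ∀ l : ℝ, 0 < l → l < 1 →
      ∀ z : Fin n → ℤ, (∀ k, (z k : ℝ) = l * (x k : ℝ) + (1 - l) * (y k : ℝ)) →
      Φ z < l * Φ x + (1 - l) * Φ y)
    (A : Fin n → Finset O) :
    (IsAlloc A ∧ ∀ B : Fin n → Finset O, IsAlloc B →
        toLex (sVec v B) ≤ toLex (sVec v A)) ↔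
    (IsAlloc A ∧ (∀ B : Fin n → Finset O, IsAlloc B → USW v B ≤ USW v A) ∧
      ∀ B : Fin n → Finset O, IsAlloc B →
        (∀ C : Fin n → Finset O, IsAlloc C → USW v C ≤ USW v B) →
        Φ (fun i => v i (A i)) ≤ Φ (fun i => v i (B i))) :=
  leximin_iff_min_symmetric_strictly_convex_general v hbin hsub Φ hsymm hconv A
end

section
/- Suppose each of n agents has a matroid rank valuation v_i on subsets of a finite set O of items. Then every clean leximin allocation is envy-free up to one good (EF1), and every clean maximum Nash welfare (MNW) allocation is EF1. -/
/-- A clean allocation: every item in every bundle has positive marginal gain. -/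
def IsClean {O : Type*} [DecidableEq O] {n : ℕ} (v : Fin n → Finset O → ℤ)
    (A : Fin n → Finset O) : Prop :=
  ∀ i, ∀ o ∈ A i, 0 < v i (A i) - v i (A i \ {o})

/-- Envy-freeness up to one good. -/
def EF1 {O : Type*} [DecidableEq O] {n : ℕ} (v : Fin n → Finset O → ℤ)
    (A : Fin n → Finset O) : Prop :=
  ∀ i j, v i (A j) ≤ v i (A i) ∨ ∃ o ∈ A j, v i (A j \ {o}) ≤ v i (A i)

/-- The set of agents with positive realized value. -/
def posAgents {O : Type*} {n : ℕ} (v : Fin n → Finset O → ℤ)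
    (A : Fin n → Finset O) : Finset (Fin n) :=
  Finset.univ.filter fun i => 0 < v i (A i)

/-- Maximum Nash welfare allocation. -/
def IsMNW {O : Type*} [DecidableEq O] {n : ℕ} (v : Fin n → Finset O → ℤ)
    (A : Fin n → Finset O) : Prop :=
  IsAlloc A ∧
  (∀ B : Fin n → Finset O, IsAlloc B → (posAgents v B).card ≤ (posAgents v A).card) ∧
  (∀ B : Fin n → Finset O, IsAlloc B → (posAgents v B).card = (posAgents v A).card →
    ∏ i ∈ posAgents v B, v i (B i) ≤ ∏ i ∈ posAgents v A, v i (A i))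

/-!
If agent `i` envies agent `j` even after removing any single good, the exchange property of
`v i` yields `o ∈ A j` raising `v i (A i)` by one. A clean bundle is independent, so
`v j (A j) = #(A j)` and losing `o` costs agent `j` exactly one, while
`v i (A i) < v i (A j \ {o}) ≤ #(A j) - 1` puts agent `j` at least two above agent `i`.
Moving `o` is therefore a Pigou–Dalton transfer `(a, b) ↦ (a + 1, b - 1)` with `a + 2 ≤ b`.
It strictly decreases the number of agents valued at most `u` for `u = a` and never increases
it for `u ≤ a`, which makes the sorted value vector lexicographically larger; and it either
makes agent `i` positive or multiplies the Nash product by `(a + 1)(b - 1) / (a b) > 1`.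
-/

open Finset Function

structure IsMatroidRank {O : Type*} [DecidableEq O] (w : Finset O → ℤ) : Prop where
  map_empty : w ∅ = 0
  marginal_binary : ∀ (S : Finset O) (o : O), o ∉ S →
    w (insert o S) - w S = 0 ∨ w (insert o S) - w S = 1
  submodular : ∀ (S T : Finset O), S ⊆ T → ∀ o ∉ T,
    w (insert o T) - w T ≤ w (insert o S) - w S

namespace IsMatroidRank

variable {O : Type*} [DecidableEq O] {w : Finset O → ℤ}

theorem le_insert (hw : IsMatroidRank w) (S : Finset O) (o : O) : w S ≤ w (insert o S) := by
  by_cases ho : o ∈ S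
  · rw [insert_eq_of_mem ho]
  · rcases hw.marginal_binary S o ho with h | h <;> omega

theorem insert_le_add_one (hw : IsMatroidRank w) (S : Finset O) (o : O) :
    w (insert o S) ≤ w S + 1 := by
  by_cases ho : o ∈ S
  · rw [insert_eq_of_mem ho]
    omega
  · rcases hw.marginal_binary S o ho with h | h <;> omega

theorem mono (hw : IsMatroidRank w) : Monotone w := by
  intro S T hST
  suffices ∀ R, w S ≤ w (S ∪ R) by simpa [union_eq_right.2 hST] using this T
  intro R
  induction R using Finset.induction_on with
  | empty => simp
  | @insert o R ho ih => exact ih.trans (union_insert o S R ▸ hw.le_insert _ o)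

theorem nonneg (hw : IsMatroidRank w) (S : Finset O) : 0 ≤ w S :=
  hw.map_empty ▸ hw.mono (empty_subset S)

theorem le_card (hw : IsMatroidRank w) (S : Finset O) : w S ≤ #S := by
  induction S using Finset.induction_on with
  | empty => simp [hw.map_empty]
  | @insert o S ho ih =>
    rw [card_insert_of_notMem ho, Nat.cast_add_one]
    linarith [hw.insert_le_add_one S o]

theorem insert_sub_le (hw : IsMatroidRank w) {S T : Finset O} (hST : S ⊆ T) (o : O) :
    w (insert o T) - w T ≤ w (insert o S) - w S := by
  by_cases ho : o ∈ T
  · rw [insert_eq_of_mem ho, sub_self, sub_nonneg]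
    exact hw.le_insert S o
  · exact hw.submodular S T hST o ho

/-- By submodularity, each item of a clean bundle still has marginal gain one on top of any
subset of the other items. -/
theorem eq_card_of_clean (hw : IsMatroidRank w) {S : Finset O}
    (hS : ∀ o ∈ S, 0 < w S - w (S \ {o})) : w S = #S := by
  suffices ∀ R ⊆ S, w R = #R from this S subset_rfl
  intro R
  induction R using Finset.induction_on with
  | empty => simp [hw.map_empty]
  | @insert o R ho ih =>
    intro hRS
    obtain ⟨hoS, hRS⟩ := insert_subset_iff.1 hRS
    have hR : R ⊆ S \ {o} := subset_sdiff.2 ⟨hRS, disjoint_singleton_right.2 ho⟩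
    have hgain := hw.insert_sub_le hR o
    rw [insert_sdiff_self_of_mem hoS] at hgain
    rw [card_insert_of_notMem ho, Nat.cast_add_one, ← ih hRS]
    linarith [hS o hoS, hw.insert_le_add_one R o]

theorem exists_insert_eq_add_one_of_lt (hw : IsMatroidRank w) {S T : Finset O}
    (h : w S < w T) : ∃ o ∈ T, w (insert o S) = w S + 1 := by
  by_contra! hT
  have hzero : ∀ o ∈ T, w (insert o S) = w S := fun o ho => by
    have := hw.le_insert S o
    have := hw.insert_le_add_one S o
    have := hT o ho
    omega
  have hunion : ∀ R ⊆ T, w (S ∪ R) = w S := by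
    intro R
    induction R using Finset.induction_on with
    | empty => simp
    | @insert o R ho ih =>
      intro hRT
      obtain ⟨hoT, hRT⟩ := insert_subset_iff.1 hRT
      have := hw.insert_sub_le (subset_union_left : S ⊆ S ∪ R) o
      have := hw.le_insert (S ∪ R) o
      rw [union_insert]
      linarith [hzero o hoT, ih hRT]
  linarith [hw.mono (subset_union_right (s₁ := S) (s₂ := T)), hunion T subset_rfl]

theorem exists_transfer_of_envy {wi wj : Finset O → ℤ} (hi : IsMatroidRank wi)
    (hj : IsMatroidRank wj) {X Y : Finset O}
    (hY : ∀ o ∈ Y, 0 < wj Y - wj (Y \ {o})) (henvy : wi X < wi Y)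
    (hEF1 : ∀ o ∈ Y, wi X < wi (Y \ {o})) :
    ∃ o ∈ Y, wi (insert o X) = wi X + 1 ∧ wj (Y \ {o}) = wj Y - 1 ∧ wi X + 2 ≤ wj Y := by
  obtain ⟨o, hoY, hgain⟩ := hi.exists_insert_eq_add_one_of_lt henvy
  have hcard : (#(Y \ {o}) : ℤ) = #Y - 1 := by
    rw [sdiff_singleton_eq_erase, cast_card_erase_of_mem hoY]
  have hloss := hj.insert_le_add_one (Y \ {o}) o
  rw [insert_sdiff_self_of_mem hoY] at hloss
  refine ⟨o, hoY, hgain, ?_, ?_⟩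
  · linarith [hY o hoY]
  · linarith [hEF1 o hoY, hi.le_card (Y \ {o}), hj.eq_card_of_clean hY]

end IsMatroidRank

theorem card_filter_comp_perm {ι : Type*} [Fintype ι] (σ : Equiv.Perm ι) (p : ι → Prop)
    [DecidablePred p] : #{k | p (σ k)} = #{k | p k} :=
  card_nbij' σ σ.symm (fun k hk => by simpa using hk) (fun k hk => by simpa using hk)
    (fun k _ => σ.symm_apply_apply k) (fun k _ => σ.apply_symm_apply k)

theorem Monotone.le_iff_lt_card_filter {α : Type*} [LinearOrder α] {n : ℕ} {s : Fin n → α}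
    (hs : Monotone s) (u : α) (k : Fin n) : s k ≤ u ↔ (k : ℕ) < #{m | s m ≤ u} := by
  constructor
  · intro hk
    have : Iic k ⊆ ({m | s m ≤ u} : Finset _) := fun m hm => by
      simpa using (hs (mem_Iic.1 hm)).trans hk
    simpa using card_le_card this
  · intro hk
    by_contra! hk'
    have : ({m | s m ≤ u} : Finset _) ⊆ Iio k := fun m hm => by
      simp only [mem_filter, mem_univ, true_and] at hm
      exact mem_Iio.2 (lt_of_not_ge fun hkm => (hk'.trans_le (hs hkm)).not_ge hm)
    simpa using (card_le_card this).trans_lt' hk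

theorem toLex_lt_of_card_filter_le {α : Type*} [LinearOrder α] {n : ℕ} {s s' : Fin n → α}
    (hs : Monotone s) (hs' : Monotone s') (t : α)
    (hle : ∀ u ≤ t, #{k | s' k ≤ u} ≤ #{k | s k ≤ u})
    (hlt : #{k | s' k ≤ t} < #{k | s k ≤ t}) : toLex s < toLex s' := by
  refine lt_of_not_ge fun hge => ?_
  rcases hge.lt_or_eq with ⟨k, hagree, hk⟩ | heq
  · have hcard : #{m | s m ≤ s' k} < #{m | s' m ≤ s' k} :=
      (not_lt.1 ((hs.le_iff_lt_card_filter _ k).not.1 hk.not_ge)).trans_lt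
        ((hs'.le_iff_lt_card_filter _ k).1 le_rfl)
    have ht : t < s' k := lt_of_not_ge fun h => (hle _ h).not_gt hcard
    let c : Fin n :=
      ⟨#{m | s' m ≤ t}, hlt.trans_le ((card_filter_le _ _).trans_eq (card_fin n))⟩
    have hsc : s c ≤ t := (hs.le_iff_lt_card_filter t c).2 hlt
    have hs'c : ¬ s' c ≤ t := fun h => lt_irrefl _ ((hs'.le_iff_lt_card_filter t c).1 h)
    have hkc : k ≤ c := le_of_not_gt fun hck => hs'c ((hagree c hck).trans_le hsc)
    exact ((hsc.trans_lt ht).trans hk).not_ge (hs hkc)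
  · rw [toLex_inj] at heq
    exact hlt.ne (by rw [heq])

theorem toLex_comp_sort_lt {α : Type*} [LinearOrder α] {n : ℕ} {f g : Fin n → α} (t : α)
    (hfg : ∀ k, g k ≤ t → f k ≤ g k) {i : Fin n} (hfi : f i ≤ t) (hgi : t < g i) :
    toLex (f ∘ Tuple.sort f) < toLex (g ∘ Tuple.sort g) := by
  have hcount (h : Fin n → α) (u : α) :
      #{k | (h ∘ Tuple.sort h) k ≤ u} = #{k | h k ≤ u} :=
    card_filter_comp_perm (Tuple.sort h) (h · ≤ u)
  have hsub : ∀ u ≤ t, ({k | g k ≤ u} : Finset _) ⊆ ({k | f k ≤ u} : Finset _) :=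
    fun u hu k hk => by
    simp only [mem_filter, mem_univ, true_and] at hk ⊢
    exact (hfg k (hk.trans hu)).trans hk
  refine toLex_lt_of_card_filter_le (Tuple.monotone_sort f) (Tuple.monotone_sort g) t
    (fun u hu => ?_) ?_ <;> rw [hcount, hcount]
  · exact card_le_card (hsub u hu)
  · refine card_lt_card ⟨hsub t le_rfl, fun hfg => ?_⟩
    have : g i ≤ t := by simpa using hfg (by simpa using hfi)
    exact hgi.not_ge this

structure IsPigouDaltonTransfer {ι : Type*} (f g : ι → ℤ) (i j : ι) : Prop where
  ne : i ≠ j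
  gap : f i + 2 ≤ f j
  apply_left : g i = f i + 1
  apply_right : g j = f j - 1
  apply_of_ne : ∀ k, k ≠ i → k ≠ j → g k = f k

namespace IsPigouDaltonTransfer

variable {ι : Type*} {f g : ι → ℤ} {i j : ι}

theorem le_apply_of_ne_right (h : IsPigouDaltonTransfer f g i j) {k : ι} (hk : k ≠ j) :
    f k ≤ g k := by
  rcases eq_or_ne k i with rfl | hki
  · simp [h.apply_left]
  · rw [h.apply_of_ne k hki hk]

theorem lt_apply_right (h : IsPigouDaltonTransfer f g i j) : f i < g j := by
  have := h.gap
  rw [h.apply_right]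
  omega

theorem toLex_comp_sort_lt {n : ℕ} {f g : Fin n → ℤ} {i j : Fin n}
    (h : IsPigouDaltonTransfer f g i j) :
    toLex (f ∘ Tuple.sort f) < toLex (g ∘ Tuple.sort g) := by
  refine _root_.toLex_comp_sort_lt (f i) (fun k hk => ?_) le_rfl (by simp [h.apply_left])
  rcases eq_or_ne k j with rfl | hkj
  · exact absurd hk h.lt_apply_right.not_ge
  · exact h.le_apply_of_ne_right hkj

theorem prod_lt_prod [DecidableEq ι] (h : IsPigouDaltonTransfer f g i j) {s : Finset ι}
    (hi : i ∈ s) (hj : j ∈ s) (hs : ∀ k ∈ s, 0 < f k) :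
    ∏ k ∈ s, f k < ∏ k ∈ s, g k := by
  have hij : {i, j} ⊆ s := insert_subset hi (singleton_subset_iff.2 hj)
  have hrest : ∏ k ∈ s \ {i, j}, g k = ∏ k ∈ s \ {i, j}, f k :=
    prod_congr rfl fun k hk => by
      simp only [mem_sdiff, mem_insert, mem_singleton, not_or] at hk
      exact h.apply_of_ne k hk.2.1 hk.2.2
  have hpair : f i * f j < g i * g j := by
    rw [h.apply_left, h.apply_right]
    nlinarith [h.gap]
  rw [← prod_sdiff hij, ← prod_sdiff hij (f := g), prod_pair h.ne, prod_pair h.ne, hrest]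
  exact mul_lt_mul_of_pos_left hpair (prod_pos fun k hk => hs k (mem_sdiff.1 hk).1)

variable [Fintype ι]

theorem card_filter_pos_lt (h : IsPigouDaltonTransfer f g i j) (hfi : f i = 0) :
    #{k | 0 < f k} < #{k | 0 < g k} := by
  refine card_lt_card ⟨fun k hk => ?_, fun hgf => ?_⟩
  · simp only [mem_filter, mem_univ, true_and] at hk ⊢
    rcases eq_or_ne k j with rfl | hkj
    · exact hfi ▸ h.lt_apply_right
    · exact hk.trans_le (h.le_apply_of_ne_right hkj)
  · have : 0 < f i := by simpa using hgf (by simp [h.apply_left, hfi])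
    exact this.ne' hfi

theorem filter_pos_eq (h : IsPigouDaltonTransfer f g i j) (hfi : 0 < f i) :
    ({k | 0 < g k} : Finset ι) = ({k | 0 < f k} : Finset ι) := by
  ext k
  simp only [mem_filter, mem_univ, true_and]
  rcases eq_or_ne k j with rfl | hkj
  · have := h.gap
    exact iff_of_true (hfi.trans h.lt_apply_right) (by omega)
  · rcases eq_or_ne k i with rfl | hki
    · exact iff_of_true (by rw [h.apply_left]; omega) hfi
    · rw [h.apply_of_ne k hki hkj]

theorem prod_filter_pos_lt (h : IsPigouDaltonTransfer f g i j) (hfi : 0 < f i) :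
    ∏ k ∈ {k | 0 < f k}, f k < ∏ k ∈ {k | 0 < g k}, g k := by
  classical
  rw [h.filter_pos_eq hfi]
  exact h.prod_lt_prod (mem_filter.2 ⟨mem_univ _, hfi⟩)
    (mem_filter.2 ⟨mem_univ _, by linarith [h.gap]⟩) fun k hk => (mem_filter.1 hk).2

end IsPigouDaltonTransfer

theorem IsAlloc.transfer {O : Type*} [DecidableEq O] {n : ℕ} {A : Fin n → Finset O}
    (hA : IsAlloc A) {i j : Fin n} (hij : i ≠ j) {o : O} (ho : o ∈ A j) :
    IsAlloc (update (update A i (insert o (A i))) j (A j \ {o})) := by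
  set B := update (update A i (insert o (A i))) j (A j \ {o})
  have hBi : B i = insert o (A i) := by simp [B, hij]
  have hB : ∀ k ≠ i, B k ⊆ A k \ {o} := fun k hki => by
    rcases eq_or_ne k j with rfl | hkj
    · simp [B]
    · have hok : o ∉ A k := disjoint_left.1 (hA j k hkj.symm) ho
      simp [B, hkj, hki, sdiff_singleton_eq_erase, erase_eq_of_notMem hok]
  have key : ∀ k l, k ≠ l → l ≠ i → Disjoint (B k) (B l) := fun k l hkl hli => by
    refine disjoint_of_subset_right (hB l hli) ?_
    rcases eq_or_ne k i with rfl | hki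
    · rw [hBi, insert_eq, disjoint_union_left]
      exact ⟨disjoint_sdiff, disjoint_of_subset_right sdiff_subset (hA k l hkl)⟩
    · exact disjoint_of_subset_left ((hB k hki).trans sdiff_subset)
        (disjoint_of_subset_right sdiff_subset (hA k l hkl))
  intro k l hkl
  rcases eq_or_ne l i with rfl | hli
  · exact (key l k hkl.symm hkl).symm
  · exact key k l hkl hli

theorem exists_isPigouDaltonTransfer_of_not_EF1 {O : Type*} [DecidableEq O] {n : ℕ}
    {v : Fin n → Finset O → ℤ} (hv : ∀ i, IsMatroidRank (v i)) {A : Fin n → Finset O}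
    (hA : IsAlloc A) (hclean : IsClean v A) (hEF1 : ¬ EF1 v A) :
    ∃ B, IsAlloc B ∧
      ∃ i j, IsPigouDaltonTransfer (fun k => v k (A k)) (fun k => v k (B k)) i j := by
  simp only [EF1, not_forall, not_or, not_exists, not_and, not_le] at hEF1
  obtain ⟨i, j, henvy, hEF1⟩ := hEF1
  obtain ⟨o, ho, hgain, hloss, hgap⟩ :=
    (hv i).exists_transfer_of_envy (hv j) (hclean j) henvy hEF1
  have hij : i ≠ j := by
    rintro rfl
    exact henvy.false
  refine ⟨_, hA.transfer hij ho, i, j, hij, hgap, ?_, ?_, fun k hki hkj => ?_⟩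
  · simpa [hij] using hgain
  · simpa using hloss
  · simp [hki, hkj]

theorem clean_leximin_and_MNW_are_EF1_general
    {O : Type*} [DecidableEq O] {n : ℕ}
    (v : Fin n → Finset O → ℤ)
    (h0 : ∀ i, v i ∅ = 0)
    (hbin : ∀ i (S : Finset O) (o : O), o ∉ S →
      v i (insert o S) - v i S = 0 ∨ v i (insert o S) - v i S = 1)
    (hsub : ∀ i (S T : Finset O), S ⊆ T → ∀ o ∉ T,
      v i (insert o T) - v i T ≤ v i (insert o S) - v i S) :
    (∀ A : Fin n → Finset O, IsAlloc A → IsClean v A →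
      (∀ B : Fin n → Finset O, IsAlloc B → toLex (sVec v B) ≤ toLex (sVec v A)) →
      EF1 v A)
    ∧
    (∀ A : Fin n → Finset O, IsClean v A → IsMNW v A → EF1 v A) := by
  have hv : ∀ i, IsMatroidRank (v i) := fun i => ⟨h0 i, hbin i, hsub i⟩
  constructor
  · intro A hA hclean hlex
    by_contra hEF1
    obtain ⟨B, hB, i, j, hT⟩ := exists_isPigouDaltonTransfer_of_not_EF1 hv hA hclean hEF1
    exact (hlex B hB).not_gt hT.toLex_comp_sort_lt
  · rintro A hclean ⟨hA, hcard, hprod⟩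
    by_contra hEF1
    obtain ⟨B, hB, i, j, hT⟩ := exists_isPigouDaltonTransfer_of_not_EF1 hv hA hclean hEF1
    rcases ((hv i).nonneg (A i)).eq_or_lt with hzero | hpos
    · exact (hcard B hB).not_gt (hT.card_filter_pos_lt hzero.symm)
    · exact (hprod B hB (congrArg card (hT.filter_pos_eq hpos))).not_gt
        (hT.prod_filter_pos_lt hpos)

/-- For matroid rank valuations, every clean leximin
allocation is EF1, and every clean MNW allocation is EF1. -/
theorem clean_leximin_and_MNW_are_EF1
    {O : Type*} [DecidableEq O] [Fintype O] {n : ℕ}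
    (v : Fin n → Finset O → ℤ)
    (h0 : ∀ i, v i ∅ = 0)
    (hbin : ∀ i (S : Finset O) (o : O), o ∉ S →
      v i (insert o S) - v i S = 0 ∨ v i (insert o S) - v i S = 1)
    (hsub : ∀ i (S T : Finset O), S ⊆ T → ∀ o ∉ T,
      v i (insert o T) - v i T ≤ v i (insert o S) - v i S) :
    (∀ A : Fin n → Finset O, IsAlloc A → IsClean v A →
      (∀ B : Fin n → Finset O, IsAlloc B → toLex (sVec v B) ≤ toLex (sVec v A)) →
      EF1 v A)
    ∧
    (∀ A : Fin n → Finset O, IsClean v A → IsMNW v A → EF1 v A) :=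
  clean_leximin_and_MNW_are_EF1_general v h0 hbin hsub
end
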